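/- For a C¹ purely vectorial function f = f₁i + f₂j + f₃k : Ω → ℍ(ℂ) on an open set Ω ⊆ ℝ³, the equation ψ^θD[f] = 0 is equivalent to the system: (1) −∂₁f₁ + (∂₂f₂ − ∂₃f₃) sin θ − (∂₂f₃ + ∂₃f₂) cos θ = 0; (2) (∂₃f₃ − ∂₂f₂) cos θ − (∂₂f₃ + ∂₃f₂) sin θ = 0; (3) −∂₁f₃ + ∂₃f₁ sin θ + ∂₂f₁ cos θ = 0; (4) ∂₁f₂ − ∂₃f₁ cos θ + ∂₂f₁ sin θ = 0. -/

import Mathlib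

noncomputable section

def iC : Quaternion ℂ := ⟨0, 1, 0, 0⟩
def jC : Quaternion ℂ := ⟨0, 0, 1, 0⟩
def kC : Quaternion ℂ := ⟨0, 0, 0, 1⟩

/-- The quaternion `e^{iθ} = cos θ + (sin θ) i`, viewed in `ℍ(ℂ)`. -/
def eC (θ : ℝ) : Quaternion ℂ := ⟨(Real.cos θ : ℂ), (Real.sin θ : ℂ), 0, 0⟩

/-- The structural set `ψ^θ = {i, i e^{iθ} j, e^{iθ} j}`. -/
def ψC (θ : ℝ) : Fin 3 → Quaternion ℂ := ![iC, iC * eC θ * jC, eC θ * jC]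

/-- Partial derivative `∂ₘ` of a complex-valued function on `ℝ³`. -/
def pd (m : Fin 3) (g : (Fin 3 → ℝ) → ℂ) (x : Fin 3 → ℝ) : ℂ :=
  fderiv ℝ g x (Pi.single m 1)

/-- Componentwise partial derivative `∂ₘ` of an `ℍ(ℂ)`-valued function on `ℝ³`. -/
def qpd (m : Fin 3) (f : (Fin 3 → ℝ) → Quaternion ℂ) (x : Fin 3 → ℝ) : Quaternion ℂ :=
  ⟨pd m (fun y => (f y).re) x, pd m (fun y => (f y).imI) x,
   pd m (fun y => (f y).imJ) x, pd m (fun y => (f y).imK) x⟩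

/-- The left generalized Cauchy–Riemann operator `ψ^θD`. -/
def DL (θ : ℝ) (f : (Fin 3 → ℝ) → Quaternion ℂ) (x : Fin 3 → ℝ) : Quaternion ℂ :=
  ψC θ 0 * qpd 0 f x + ψC θ 1 * qpd 1 f x + ψC θ 2 * qpd 2 f x

/-- The right generalized Cauchy–Riemann operator `Dψ^θ`. -/
def DR (θ : ℝ) (f : (Fin 3 → ℝ) → Quaternion ℂ) (x : Fin 3 → ℝ) : Quaternion ℂ :=
  qpd 0 f x * ψC θ 0 + qpd 1 f x * ψC θ 1 + qpd 2 f x * ψC θ 2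

/-- The generalized Laplacian system (1)–(4) for the vector field `(f₁, f₂, f₃)` at `x`
(here `∂₁ = pd 0`, `∂₂ = pd 1`, `∂₃ = pd 2`). -/
def GLsys (θ : ℝ) (f₁ f₂ f₃ : (Fin 3 → ℝ) → ℂ) (x : Fin 3 → ℝ) : Prop :=
  (-pd 0 f₁ x + (pd 1 f₂ x - pd 2 f₃ x) * (Real.sin θ : ℂ)
      - (pd 1 f₃ x + pd 2 f₂ x) * (Real.cos θ : ℂ) = 0) ∧
  ((pd 2 f₃ x - pd 1 f₂ x) * (Real.cos θ : ℂ)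
      - (pd 1 f₃ x + pd 2 f₂ x) * (Real.sin θ : ℂ) = 0) ∧
  (-pd 0 f₃ x + pd 2 f₁ x * (Real.sin θ : ℂ) + pd 1 f₁ x * (Real.cos θ : ℂ) = 0) ∧
  (pd 0 f₂ x - pd 2 f₁ x * (Real.cos θ : ℂ) + pd 1 f₁ x * (Real.sin θ : ℂ) = 0)

theorem pd_const (m : Fin 3) (c : ℂ) (x : Fin 3 → ℝ) : pd m (fun _ => c) x = 0 := by
  simp [pd]

theorem qpd_pureVector (m : Fin 3) (f₁ f₂ f₃ : (Fin 3 → ℝ) → ℂ) (x : Fin 3 → ℝ) :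
    qpd m (fun y => (⟨0, f₁ y, f₂ y, f₃ y⟩ : Quaternion ℂ)) x =
      (⟨0, pd m f₁ x, pd m f₂ x, pd m f₃ x⟩ : Quaternion ℂ) := by
  simp only [qpd, pd_const]
  rfl

theorem ψC_zero (θ : ℝ) : ψC θ 0 = (⟨0, 1, 0, 0⟩ : Quaternion ℂ) := rfl

theorem ψC_one (θ : ℝ) :
    ψC θ 1 = (⟨0, 0, -(Real.sin θ : ℂ), (Real.cos θ : ℂ)⟩ : Quaternion ℂ) := by
  change iC * eC θ * jC = _
  ext <;> simp only [Quaternion.re_mul, Quaternion.imI_mul, Quaternion.imJ_mul,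
    Quaternion.imK_mul] <;> simp [iC, eC, jC]

theorem ψC_two (θ : ℝ) :
    ψC θ 2 = (⟨0, 0, (Real.cos θ : ℂ), (Real.sin θ : ℂ)⟩ : Quaternion ℂ) := by
  change eC θ * jC = _
  ext <;> simp only [Quaternion.re_mul, Quaternion.imI_mul, Quaternion.imJ_mul,
    Quaternion.imK_mul] <;> simp [eC, jC]

theorem DL_pureVector (θ : ℝ) (f₁ f₂ f₃ : (Fin 3 → ℝ) → ℂ) (x : Fin 3 → ℝ) :
    DL θ (fun y => (⟨0, f₁ y, f₂ y, f₃ y⟩ : Quaternion ℂ)) x =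
      (⟨-pd 0 f₁ x + (pd 1 f₂ x - pd 2 f₃ x) * (Real.sin θ : ℂ)
          - (pd 1 f₃ x + pd 2 f₂ x) * (Real.cos θ : ℂ),
        (pd 2 f₃ x - pd 1 f₂ x) * (Real.cos θ : ℂ)
          - (pd 1 f₃ x + pd 2 f₂ x) * (Real.sin θ : ℂ),
        -pd 0 f₃ x + pd 2 f₁ x * (Real.sin θ : ℂ) + pd 1 f₁ x * (Real.cos θ : ℂ),
        pd 0 f₂ x - pd 2 f₁ x * (Real.cos θ : ℂ) + pd 1 f₁ x * (Real.sin θ : ℂ)⟩ :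
        Quaternion ℂ) := by
  ext <;> simp only [DL, Quaternion.re_add, Quaternion.imI_add, Quaternion.imJ_add,
    Quaternion.imK_add, Quaternion.re_mul, Quaternion.imI_mul, Quaternion.imJ_mul,
    Quaternion.imK_mul] <;>
    simp only [ψC_zero, ψC_one, ψC_two, qpd_pureVector] <;> ring

theorem stmt_12_general (θ : ℝ) (Ω : Set (Fin 3 → ℝ))
    (f₁ f₂ f₃ : (Fin 3 → ℝ) → ℂ) :
    ∀ x ∈ Ω,
      DL θ (fun y => (⟨0, f₁ y, f₂ y, f₃ y⟩ : Quaternion ℂ)) x = 0 ↔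
      GLsys θ f₁ f₂ f₃ x := by
  intro x _
  rw [DL_pureVector]
  exact Quaternion.ext_iff

/-- For a `C¹` purely vectorial `f = f₁i + f₂j + f₃k`, `ψ^θD[f] = 0` is equivalent to
the generalized Laplacian system (1)–(4). -/
theorem stmt_12 (θ : ℝ) (Ω : Set (Fin 3 → ℝ)) (hΩ : IsOpen Ω)
    (f₁ f₂ f₃ : (Fin 3 → ℝ) → ℂ)
    (h1 : ContDiffOn ℝ 1 f₁ Ω) (h2 : ContDiffOn ℝ 1 f₂ Ω) (h3 : ContDiffOn ℝ 1 f₃ Ω) :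
    ∀ x ∈ Ω,
      DL θ (fun y => (⟨0, f₁ y, f₂ y, f₃ y⟩ : Quaternion ℂ)) x = 0 ↔
      GLsys θ f₁ f₂ f₃ x :=
  stmt_12_general θ Ω f₁ f₂ f₃
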